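/- Let f̂ ≥ 1 be an integer, set f = 5·f̂ + 2, and let q̂₀, q̂₁, q̂₅ be positive real numbers; set q₄ = q̂₁^(−1/5), q₅ = q̂₁^(−3/5)·q̂₅, q₀ = q̂₁^(1/5)·q̂₀. Then the (unordered, possibly divergent) complex tsum over the index set S = {(m₀, m₄, m₅) ∈ ℤ³ : m₀ ≥ 1, m₄, m₅ ≥ 0, 5 ∣ (m₀ − m₄ − 3m₅), m₀ − m₄ − 3m₅ ≥ 0} of the orbifold superpotential terms T(m₀, m₄, m₅) = exp(iπ·(⌊(−2m₄ − m₅)/5⌋ + m₀·(1 − (f+1)/5))) · q₀^(m₀) q₄^(m₄) q₅^(m₅) · Γ((f+1)m₀/5 + (2/5)m₄ + (1/5)m₅) / [ (m₀/5) Γ(1 + (m₀ − m₄ − 3m₅)/5) Γ(1 + m₄) Γ(1 + m₅) Γ(1 + (f/5)m₀ − (2/5)m₄ − (1/5)m₅) ] equals 5 times the tsum over Ŝ = {(m̂₀, m̂₁, m̂₅) ∈ ℤ³ : m̂₀ ≥ 1, m̂₁, m̂₅ ≥ 0, m̂₀ − 5m̂₁ − 3m̂₅ ≥ 0} of the resolution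 superpotential terms T̂(m̂₀, m̂₁, m̂₅) = exp(iπ·(2m̂₁ + m̂₅ + (f̂ + 2/5)m̂₀ + ⌊−2m̂₀/5⌋)) · q̂₀^(m̂₀) q̂₁^(m̂₁) q̂₅^(m̂₅) · Γ((f̂+1)m̂₀ − 2m̂₁ − m̂₅) / [ m̂₀ Γ(1 + m̂₀ − 5m̂₁ − 3m̂₅) Γ(1 + m̂₁) Γ(1 + m̂₅) Γ(1 + f̂m̂₀ + 2m̂₁ + m̂₅) ]. That is, W_f^{X,L}(q(q̂), q₀(q̂, q̂₀)) = 5·W_f̂^{X̂,L̂}(q̂, q̂₀). -/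

import Mathlib

/-!
The change of variables among the Kähler parameters is dual to the lattice map
`(m̂₀, m̂₁, m̂₅) ↦ (m₀, m₄, m₅) = (m̂₀, m̂₀ − 5m̂₁ − 3m̂₅, m̂₅)`, which is a bijection of `resIndexSet`
onto `orbIndexSet` (the divisibility condition `5 ∣ m₀ − m₄ − 3m₅` is exactly what makes
`m̂₁ = (m₀ − m₄ − 3m₅)/5` integral). Along this bijection the two series agree term by term up to
the factor `5`: the Gamma arguments and the monomials in the Kähler parameters match exactly,
the phases differ by `exp(−2πi f̂ m̂₀) = 1`, and the prefactor `m₀/5` of the orbifold term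
accounts for the `5`.
-/

open Real Complex

/-- The index set of the orbifold superpotential series: triples `(m₀, m₄, m₅)` with
`m₀ ≥ 1`, `m₄, m₅ ≥ 0`, `5 ∣ m₀ − m₄ − 3m₅` and `m₀ − m₄ − 3m₅ ≥ 0`. -/
def orbIndexSet : Set (ℤ × ℤ × ℤ) :=
  {p | 1 ≤ p.1 ∧ 0 ≤ p.2.1 ∧ 0 ≤ p.2.2 ∧ (5 : ℤ) ∣ (p.1 - p.2.1 - 3 * p.2.2) ∧
    0 ≤ p.1 - p.2.1 - 3 * p.2.2}

/-- The index set of the resolution superpotential series: triples `(m̂₀, m̂₁, m̂₅)` with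
`m̂₀ ≥ 1`, `m̂₁, m̂₅ ≥ 0` and `m̂₀ − 5m̂₁ − 3m̂₅ ≥ 0`. -/
def resIndexSet : Set (ℤ × ℤ × ℤ) :=
  {p | 1 ≤ p.1 ∧ 0 ≤ p.2.1 ∧ 0 ≤ p.2.2 ∧ 0 ≤ p.1 - 5 * p.2.1 - 3 * p.2.2}

/-- The general term of the orbifold superpotential series `W_f^{X,L}` for
`X = [ℂ³/ℤ₅(1,1,3)]` at framing `f`, with Kähler parameters `q₀, q₄, q₅` (positive reals)
and indices `(m₀, m₄, m₅)`.  Here `(−1)^x` is interpreted as `exp(iπ·x)` and `Γ` is the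
complex Gamma function. -/
noncomputable def orbSuperTerm (f : ℤ) (q0 q4 q5 : ℝ) (m0 m4 m5 : ℤ) : ℂ :=
  Complex.exp ((Real.pi : ℂ) * Complex.I *
      ((⌊((-2 * m4 - m5 : ℤ) : ℚ) / 5⌋ : ℂ) + (m0 : ℂ) * (1 - ((f : ℂ) + 1) / 5))) *
    ((q0 ^ m0 * q4 ^ m4 * q5 ^ m5 : ℝ) : ℂ) *
    Complex.Gamma (((f : ℂ) + 1) * m0 / 5 + 2 / 5 * m4 + 1 / 5 * m5) /
    ((m0 : ℂ) / 5 * Complex.Gamma (1 + ((m0 : ℂ) - m4 - 3 * m5) / 5) *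
      Complex.Gamma (1 + (m4 : ℂ)) * Complex.Gamma (1 + (m5 : ℂ)) *
      Complex.Gamma (1 + (f : ℂ) / 5 * m0 - 2 / 5 * m4 - 1 / 5 * m5))

/-- The general term of the resolution superpotential series `W_f̂^{X̂,L̂}` for the toric
crepant resolution of `[ℂ³/ℤ₅(1,1,3)]` at framing `f̂`, with Kähler parameters
`q̂₀, q̂₁, q̂₅` (positive reals) and indices `(m̂₀, m̂₁, m̂₅)`. -/
noncomputable def resSuperTerm (fh : ℤ) (qh0 qh1 qh5 : ℝ) (m0 m1 m5 : ℤ) : ℂ :=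
  Complex.exp ((Real.pi : ℂ) * Complex.I *
      ((2 * m1 + m5 : ℂ) + ((fh : ℂ) + 2 / 5) * m0 + (⌊((-2 * m0 : ℤ) : ℚ) / 5⌋ : ℂ))) *
    ((qh0 ^ m0 * qh1 ^ m1 * qh5 ^ m5 : ℝ) : ℂ) *
    Complex.Gamma (((fh : ℂ) + 1) * m0 - 2 * m1 - m5) /
    ((m0 : ℂ) * Complex.Gamma (1 + (m0 : ℂ) - 5 * m1 - 3 * m5) *
      Complex.Gamma (1 + (m1 : ℂ)) * Complex.Gamma (1 + (m5 : ℂ)) *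
      Complex.Gamma (1 + (fh : ℂ) * m0 + 2 * m1 + m5))

def resIndexSetEquivOrbIndexSet : resIndexSet ≃ orbIndexSet where
  toFun p := ⟨(p.1.1, p.1.1 - 5 * p.1.2.1 - 3 * p.1.2.2, p.1.2.2), by
    have hp := p.2
    simp only [resIndexSet, orbIndexSet, Set.mem_ofPred_eq] at hp ⊢
    exact ⟨hp.1, hp.2.2.2, hp.2.2.1, ⟨p.1.2.1, by ring⟩, by omega⟩⟩
  invFun p := ⟨(p.1.1, (p.1.1 - p.1.2.1 - 3 * p.1.2.2) / 5, p.1.2.2), by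
    have hp := p.2
    simp only [resIndexSet, orbIndexSet, Set.mem_ofPred_eq] at hp ⊢
    exact ⟨hp.1, by omega, hp.2.2.1, by omega⟩⟩
  left_inv p := Subtype.ext <| Prod.ext rfl <| Prod.ext (by dsimp only; omega) rfl
  right_inv p := by
    have hp := p.2
    simp only [orbIndexSet, Set.mem_ofPred_eq] at hp
    exact Subtype.ext <| Prod.ext rfl <| Prod.ext (by dsimp only; omega) rfl

lemma exp_pi_mul_I_add_two_mul_intCast (x : ℂ) (n : ℤ) :
    Complex.exp (π * I * (x + 2 * n)) = Complex.exp (π * I * x) := by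
  rw [show (π : ℂ) * I * (x + 2 * n) = π * I * x + n * (2 * π * I) by ring,
    Complex.exp_add, exp_int_mul_two_pi_mul_I, mul_one]

lemma orbPhase_eq_resPhase (fh m0 m1 m5 : ℤ) :
    Complex.exp (π * I * ((⌊((-2 * (m0 - 5 * m1 - 3 * m5) - m5 : ℤ) : ℚ) / 5⌋ : ℂ) +
        (m0 : ℂ) * (1 - (((5 * fh + 2 : ℤ) : ℂ) + 1) / 5))) =
      Complex.exp (π * I *
        ((2 * m1 + m5 : ℂ) + ((fh : ℂ) + 2 / 5) * m0 + (⌊((-2 * m0 : ℤ) : ℚ) / 5⌋ : ℂ))) := by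
  have hfloor : ⌊((-2 * (m0 - 5 * m1 - 3 * m5) - m5 : ℤ) : ℚ) / 5⌋ =
      ⌊((-2 * m0 : ℤ) : ℚ) / 5⌋ + (2 * m1 + m5) := by
    rw [← Int.floor_add_intCast]
    push_cast
    ring_nf
  rw [← exp_pi_mul_I_add_two_mul_intCast _ (fh * m0), hfloor]
  push_cast
  ring_nf

lemma kahlerMonomial_change_of_variables {qh1 : ℝ} (h1 : 0 < qh1) (qh0 qh5 : ℝ)
    (m0 m1 m5 : ℤ) :
    (qh1 ^ ((1 : ℝ) / 5) * qh0) ^ m0 * (qh1 ^ (-(1 : ℝ) / 5)) ^ (m0 - 5 * m1 - 3 * m5) *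
        (qh1 ^ (-(3 : ℝ) / 5) * qh5) ^ m5 =
      qh0 ^ m0 * qh1 ^ m1 * qh5 ^ m5 := by
  have hq1 : qh1 ^ ((1 : ℝ) / 5 * m0) * qh1 ^ (-(1 : ℝ) / 5 * (m0 - 5 * m1 - 3 * m5 : ℤ)) *
      qh1 ^ (-(3 : ℝ) / 5 * m5) = qh1 ^ m1 := by
    rw [← Real.rpow_add h1, ← Real.rpow_add h1, ← Real.rpow_intCast qh1 m1]
    push_cast
    ring_nf
  simp only [mul_zpow, ← Real.rpow_mul_intCast h1.le] at hq1 ⊢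
  linear_combination (qh0 ^ m0 * qh5 ^ m5) * hq1

lemma orbSuperTerm_eq_five_mul_resSuperTerm (fh : ℤ) (qh0 : ℝ) {qh1 : ℝ} (h1 : 0 < qh1)
    (qh5 : ℝ) (m0 m1 m5 : ℤ) :
    orbSuperTerm (5 * fh + 2) (qh1 ^ ((1 : ℝ) / 5) * qh0) (qh1 ^ (-(1 : ℝ) / 5))
        (qh1 ^ (-(3 : ℝ) / 5) * qh5) m0 (m0 - 5 * m1 - 3 * m5) m5 =
      5 * resSuperTerm fh qh0 qh1 qh5 m0 m1 m5 := by
  have hΓnum : (((5 * fh + 2 : ℤ) : ℂ) + 1) * m0 / 5 + 2 / 5 * ((m0 - 5 * m1 - 3 * m5 : ℤ) : ℂ) +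
      1 / 5 * m5 = ((fh : ℂ) + 1) * m0 - 2 * m1 - m5 := by push_cast; ring
  have hΓm1 : 1 + ((m0 : ℂ) - ((m0 - 5 * m1 - 3 * m5 : ℤ) : ℂ) - 3 * m5) / 5 = 1 + (m1 : ℂ) := by
    push_cast; ring
  have hΓm4 : 1 + ((m0 - 5 * m1 - 3 * m5 : ℤ) : ℂ) = 1 + (m0 : ℂ) - 5 * m1 - 3 * m5 := by
    push_cast; ring
  have hΓframing : 1 + ((5 * fh + 2 : ℤ) : ℂ) / 5 * m0 - 2 / 5 * ((m0 - 5 * m1 - 3 * m5 : ℤ) : ℂ) -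
      1 / 5 * m5 = 1 + (fh : ℂ) * m0 + 2 * m1 + m5 := by push_cast; ring
  rw [orbSuperTerm, resSuperTerm, orbPhase_eq_resPhase, kahlerMonomial_change_of_variables h1,
    hΓnum, hΓm1, hΓm4, hΓframing]
  ring

theorem quantum_McKay_disc_potential_general (fh : ℤ) (f : ℤ)
    (hf : f = 5 * fh + 2) (qh0 qh1 qh5 : ℝ) (h1 : 0 < qh1) :
    (∑' p : orbIndexSet,
        orbSuperTerm f (qh1 ^ ((1 : ℝ) / 5) * qh0) (qh1 ^ (-(1 : ℝ) / 5))
          (qh1 ^ (-(3 : ℝ) / 5) * qh5) (p : ℤ × ℤ × ℤ).1 (p : ℤ × ℤ × ℤ).2.1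
          (p : ℤ × ℤ × ℤ).2.2) =
      5 * ∑' p : resIndexSet,
        resSuperTerm fh qh0 qh1 qh5 (p : ℤ × ℤ × ℤ).1 (p : ℤ × ℤ × ℤ).2.1
          (p : ℤ × ℤ × ℤ).2.2 := by
  subst hf
  rw [← resIndexSetEquivOrbIndexSet.tsum_eq, ← tsum_mul_left]
  exact tsum_congr fun p => orbSuperTerm_eq_five_mul_resSuperTerm fh qh0 h1 qh5 _ _ _

/-- Quantum McKay correspondence for disc potentials of `[ℂ³/ℤ₅(1,1,3)]`:
with `f̂ ≥ 1`, `f = 5·f̂ + 2`, positive Kähler parameters `q̂₀, q̂₁, q̂₅`, and the change of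
variables `q₄ = q̂₁^(−1/5)`, `q₅ = q̂₁^(−3/5)·q̂₅`, `q₀ = q̂₁^(1/5)·q̂₀`, the tsum of the
orbifold superpotential terms over `orbIndexSet` equals `5` times the tsum of the
resolution superpotential terms over `resIndexSet`; i.e.
`W_f^{X,L}(q(q̂), q₀(q̂, q̂₀)) = 5·W_f̂^{X̂,L̂}(q̂, q̂₀)`. -/
theorem quantum_McKay_disc_potential (fh : ℤ) (hfh : 1 ≤ fh) (f : ℤ)
    (hf : f = 5 * fh + 2) (qh0 qh1 qh5 : ℝ) (h0 : 0 < qh0) (h1 : 0 < qh1) (h5 : 0 < qh5) :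
    (∑' p : orbIndexSet,
        orbSuperTerm f (qh1 ^ ((1 : ℝ) / 5) * qh0) (qh1 ^ (-(1 : ℝ) / 5))
          (qh1 ^ (-(3 : ℝ) / 5) * qh5) (p : ℤ × ℤ × ℤ).1 (p : ℤ × ℤ × ℤ).2.1
          (p : ℤ × ℤ × ℤ).2.2) =
      5 * ∑' p : resIndexSet,
        resSuperTerm fh qh0 qh1 qh5 (p : ℤ × ℤ × ℤ).1 (p : ℤ × ℤ × ℤ).2.1
          (p : ℤ × ℤ × ℤ).2.2 :=
  quantum_McKay_disc_potential_general fh f hf qh0 qh1 qh5 h1
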